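/- For every ε with 0 < ε < 1/2 there is a constant C(ε) ≤ (1+ε)²/(4ε²(1−ε)) such that every ⌈εn⌉-connected graph G on n vertices satisfies md(G) ≤ C(ε). In particular, if Γ is an extremal MD-coloring of a k-connected graph G with k = εn, then for each color i, the number of unordered vertex pairs separated by color i is at least k(n−k). -/

import Mathlib

open SimpleGraph

variable {V : Type*}

/-- Color `i` separates `u` and `v`: there is an edge-cut, all of whose edges
have color `i`, whose removal disconnects `u` from `v`. -/
def separatesColor (G : SimpleGraph V) (Γ : Sym2 V → ℕ) (i : ℕ) (u v : V) : Prop :=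
  ∃ F : Set (Sym2 V), F ⊆ G.edgeSet ∧ (∀ e ∈ F, Γ e = i) ∧
    ¬ ((G.deleteEdges F).Reachable u v)

/-- An MD-coloring: every pair of distinct vertices is separated by a
monochromatic edge-cut. -/
def IsMDColoring (G : SimpleGraph V) (Γ : Sym2 V → ℕ) : Prop :=
  ∀ u v : V, u ≠ v → ∃ i, separatesColor G Γ i u v

/-- The monochromatic disconnection number: the maximum number of colors
used by an MD-coloring. -/
noncomputable def mdNumber (G : SimpleGraph V) : ℕ :=
  sSup {k | ∃ Γ : Sym2 V → ℕ, IsMDColoring G Γ ∧ (Γ '' G.edgeSet).ncard = k}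

/-!
Deleting the edges of one colour `i` of an MD-colouring splits `G` into components, and `i`
separates exactly the pairs lying in different components. If a vertex had two `i`-coloured
edges into one component, the two ends would be separated by no colour at all, so a vertex
outside a component has at most one neighbour in it. With minimum degree `k` every component
therefore has at most `n - k` vertices, which forces at least `k(n - k)` separated pairs.

Conversely, a colour separating `x` and `y` occurs on every `x`-`y` path, so at most `d(x, y)`
colours separate them; summing, the number of colours times `2k(n - k)` is at most the sum of
all distances. In a `k`-connected graph every distance sphere around `u` except the outermost
separates `u` from the farthest vertex and so has at least `k` vertices, which bounds the
distances from `u` by `(2(n - 1) + k)² / (8k)` in total.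
-/

open Finset
open scoped Classical

theorem sum_range_sub_mul_le (a : ℝ) {b : ℝ} (hb : 0 < b) (D : ℕ) :
    ∑ j ∈ range D, (a - b * j) ≤ (2 * a + b) ^ 2 / (8 * b) := by
  have hsum : ∑ j ∈ range D, (a - b * j) = D * a - b * (D * (D - 1) / 2) := by
    induction D with
    | zero => simp
    | succ D ih => rw [sum_range_succ, ih]; push_cast; ring
  rw [hsum, le_div_iff₀ (by positivity)]
  nlinarith [sq_nonneg (2 * a + b - 2 * b * D)]

theorem Equivalence.two_mul_mul_le_sum_card_not_rel {α : Type*} [Fintype α]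
    {r : α → α → Prop} [DecidableRel r] (hr : Equivalence r) {k : ℕ}
    (hcls : ∀ x, #{y | r x y} + k ≤ Fintype.card α) (hk : 2 * k ≤ Fintype.card α + 1) :
    2 * (k * (Fintype.card α - k)) ≤ ∑ x, #{y | ¬ r x y} := by
  set n := Fintype.card α
  have hcompl : ∀ x, #{y | ¬ r x y} = n - #{y | r x y} := fun x => by
    rw [filter_not, card_sdiff_of_subset (filter_subset _ _), card_univ]
  by_cases hbig : ∃ x₀, k ≤ #{y | r x₀ y}
  · -- a class of size `m ∈ [k, n - k]`: every vertex outside it is unrelated to all of it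
    obtain ⟨x₀, hx₀⟩ := hbig
    set m := #{y | r x₀ y}
    have hterm : ∀ x ∈ univ, (if r x₀ x then n - m else m) ≤ #{y | ¬ r x y} := by
      intro x _
      split_ifs with hx
      · rw [hcompl, filter_congr fun y _ => ⟨hr.trans hx, hr.trans (hr.symm hx)⟩]
      · refine card_le_card fun y hy => ?_
        simp only [mem_filter, mem_univ, true_and] at hy ⊢
        exact fun hxy => hx (hr.trans hy (hr.symm hxy))
    have hsum : ∑ x, (if r x₀ x then n - m else m) = 2 * (m * (n - m)) := by
      rw [sum_ite, sum_const, sum_const, smul_eq_mul, smul_eq_mul, ← hcompl x₀]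
      ring
    have hmn := hcls x₀
    calc 2 * (k * (n - k)) ≤ 2 * (m * (n - m)) := by
          zify [hx₀, (by omega : k ≤ n), (by omega : m ≤ n)]
          nlinarith [mul_nonneg (sub_nonneg.2 (Int.ofNat_le.2 hx₀))
            (sub_nonneg.2 (Int.ofNat_le.2 hmn))]
      _ = ∑ x, (if r x₀ x then n - m else m) := hsum.symm
      _ ≤ _ := sum_le_sum hterm
  · push Not at hbig
    have hterm : ∀ x ∈ univ, n + 1 - k ≤ #{y | ¬ r x y} := fun x _ => by
      rw [hcompl]
      have := hbig x
      omega
    calc 2 * (k * (n - k)) ≤ n * (n + 1 - k) := by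
          rcases le_or_gt k n with hkn | hkn
          · zify [hkn, (by omega : k ≤ n + 1)]
            nlinarith
          · simp [Nat.sub_eq_zero_of_le hkn.le]
      _ = ∑ _x : α, (n + 1 - k) := by simp [n]
      _ ≤ _ := sum_le_sum hterm

namespace SimpleGraph

theorem edgeSet_eq_setOf_forall_adj (H : SimpleGraph V) :
    H.edgeSet = {p | ¬ p.IsDiag ∧ ∀ u v, p = s(u, v) → H.Adj u v} := by
  ext p
  induction p using Sym2.ind with
  | _ u v =>
    simp only [mem_edgeSet, Set.mem_ofPred_eq, Sym2.mk_isDiag_iff, Sym2.eq_iff]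
    refine ⟨fun h => ⟨h.ne, ?_⟩, fun h => h.2 u v (Or.inl ⟨rfl, rfl⟩)⟩
    rintro a b (⟨rfl, rfl⟩ | ⟨rfl, rfl⟩)
    exacts [h, h.symm]

theorem Walk.exists_mem_support_dist_eq {G : SimpleGraph V} {u a b : V} (p : G.Walk a b)
    {m : ℕ} (ha : G.dist u a ≤ m) (hb : m ≤ G.dist u b) :
    ∃ x ∈ p.support, G.dist u x = m := by
  induction p with
  | nil => exact ⟨_, by simp, le_antisymm ha hb⟩
  | cons h p ih =>
    rcases ha.eq_or_lt with ha | ha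
    · exact ⟨_, Walk.start_mem_support _, ha⟩
    · obtain ⟨x, hx, rfl⟩ := ih (by have := h.diff_dist_adj (u := u); omega) hb
      exact ⟨x, by simp [hx], rfl⟩

theorem connected_of_forall_induce_compl_connected {G : SimpleGraph V} {k : ℕ}
    (hconn : ∀ S : Set V, S.ncard < k → (G.induce Sᶜ).Connected) (hk : 0 < k) :
    G.Connected := by
  have h := hconn ∅ (by simpa using hk)
  rw [Set.compl_empty] at h
  exact (induceUnivIso G).connected_iff.1 h

theorem le_ncard_of_forall_walk_meets {G : SimpleGraph V} {k : ℕ}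
    (hconn : ∀ S : Set V, S.ncard < k → (G.induce Sᶜ).Connected) {S : Set V} {u w : V}
    (hu : u ∉ S) (hw : w ∉ S) (hS : ∀ p : G.Walk u w, ∃ x ∈ p.support, x ∈ S) :
    k ≤ S.ncard := by
  by_contra! hlt
  obtain ⟨q⟩ := (hconn S hlt).preconnected ⟨u, hu⟩ ⟨w, hw⟩
  have hq : ∀ x ∈ (q.map (Embedding.induce Sᶜ).toHom).support, x ∉ S := by
    intro x hx
    rw [Walk.support_map, List.mem_map] at hx
    obtain ⟨y, -, rfl⟩ := hx
    exact y.2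
  obtain ⟨x, hx, hxS⟩ := hS (q.map (Embedding.induce Sᶜ).toHom)
  exact hq x hx hxS

section Connectivity

variable [Fintype V] {G : SimpleGraph V} {k : ℕ}

theorem le_degree_of_forall_induce_compl_connected
    (hconn : ∀ S : Set V, S.ncard < k → (G.induce Sᶜ).Connected) (hkn : k < Fintype.card V)
    (v : V) : k ≤ G.degree v := by
  by_contra! hlt
  have hcard : #(insert v (G.neighborFinset v)) < #(univ : Finset V) := by
    refine (card_insert_le _ _).trans_lt ?_
    rw [card_neighborFinset_eq_degree, card_univ]
    omega
  obtain ⟨w, -, hw⟩ := exists_mem_notMem_of_card_lt_card hcard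
  rw [mem_insert, mem_neighborFinset, not_or] at hw
  have hN : (G.neighborSet v).ncard = G.degree v := by
    rw [← card_neighborFinset_eq_degree, ← Set.ncard_coe_finset, coe_neighborFinset]
  -- the neighbourhood of `v` separates `v` from the non-neighbour `w`
  refine hlt.not_ge (hN ▸ le_ncard_of_forall_walk_meets hconn
    (G.notMem_neighborSet_self (a := v)) (by simpa using hw.2) fun p => ?_)
  cases p with
  | nil => exact absurd rfl hw.1
  | cons h q => exact ⟨_, by simp, h⟩

theorem le_card_filter_dist_eq
    (hconn : ∀ S : Set V, S.ncard < k → (G.induce Sᶜ).Connected) {u w : V} {m : ℕ}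
    (hm : 0 < m) (hmw : m < G.dist u w) : k ≤ #{v | G.dist u v = m} := by
  rw [← Set.ncard_coe_finset, coe_filter_univ]
  exact le_ncard_of_forall_walk_meets (u := u) (w := w) hconn (by simp; omega) (by simp; omega)
    fun p => p.exists_mem_support_dist_eq (by simp) hmw.le

theorem add_mul_le_card_filter_dist_le
    (hconn : ∀ S : Set V, S.ncard < k → (G.induce Sᶜ).Connected) {u w : V} :
    ∀ {j : ℕ}, j < G.dist u w → 1 + k * j ≤ #{v | G.dist u v ≤ j}
  | 0, _ => by simpa using ⟨u, by simp⟩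
  | j + 1, hj => by
    set B : Finset V := {v | G.dist u v ≤ j}
    set S : Finset V := {v | G.dist u v = j + 1}
    have hdisj : Disjoint B S := disjoint_filter.2 fun _ _ h1 h2 => by omega
    calc 1 + k * (j + 1) = (1 + k * j) + k := by ring
      _ ≤ #B + #S :=
        add_le_add (add_mul_le_card_filter_dist_le (u := u) (w := w) hconn (by omega))
          (le_card_filter_dist_eq hconn j.succ_pos hj)
      _ = #(B ∪ S) := (card_union_of_disjoint hdisj).symm
      _ ≤ #{v | G.dist u v ≤ j + 1} := card_le_card fun v => by
        simp only [B, S, mem_union, mem_filter, mem_univ, true_and]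
        omega

theorem sum_dist_le (hconn : ∀ S : Set V, S.ncard < k → (G.induce Sᶜ).Connected) (hk : 0 < k)
    (u : V) : ∑ v, (G.dist u v : ℝ) ≤ (2 * (Fintype.card V - 1 : ℝ) + k) ^ 2 / (8 * k) := by
  have : Nonempty V := ⟨u⟩
  obtain ⟨w, hw⟩ := Finite.exists_max (G.dist u)
  have hlayers : ∑ v, G.dist u v = ∑ j ∈ range (G.dist u w), #{v | j < G.dist u v} := by
    calc ∑ v, G.dist u v = ∑ v, #{j ∈ range (G.dist u w) | j < G.dist u v} :=
          sum_congr rfl fun v _ => by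
            have hv : {j ∈ range (G.dist u w) | j < G.dist u v} = range (G.dist u v) := by
              ext j
              simp only [mem_filter, mem_range]
              have := hw v
              omega
            rw [hv, card_range]
      _ = _ := sum_card_bipartiteAbove_eq_sum_card_bipartiteBelow _
  have hlayer : ∀ j ∈ range (G.dist u w),
      (#{v | j < G.dist u v} : ℝ) ≤ (Fintype.card V - 1 : ℝ) - k * j := by
    intro j hj
    have hball := add_mul_le_card_filter_dist_le hconn (mem_range.1 hj)
    have hsplit := card_filter_add_card_filter_not (s := univ) (fun v => j < G.dist u v)
    simp only [not_lt, card_univ] at hsplit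
    rw [sub_sub, le_sub_iff_add_le]
    exact_mod_cast (by omega : #{v | j < G.dist u v} + (1 + k * j) ≤ Fintype.card V)
  calc ∑ v, (G.dist u v : ℝ) = ∑ j ∈ range (G.dist u w), (#{v | j < G.dist u v} : ℝ) := by
        exact_mod_cast hlayers
    _ ≤ ∑ j ∈ range (G.dist u w), ((Fintype.card V - 1 : ℝ) - k * j) := sum_le_sum hlayer
    _ ≤ _ := sum_range_sub_mul_le _ (by exact_mod_cast hk) _

end Connectivity

def deleteColor (G : SimpleGraph V) (Γ : Sym2 V → ℕ) (i : ℕ) : SimpleGraph V :=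
  G.deleteEdges (Γ ⁻¹' {i})

variable {G : SimpleGraph V} {Γ : Sym2 V → ℕ} {i : ℕ}

theorem separatesColor_iff {u v : V} :
    separatesColor G Γ i u v ↔ ¬ (G.deleteColor Γ i).Reachable u v := by
  refine ⟨fun ⟨F, _, hF, huv⟩ h => huv (h.mono (deleteEdges_anti hF)), fun h => ?_⟩
  refine ⟨Γ ⁻¹' {i} ∩ G.edgeSet, Set.inter_subset_right, fun e he => he.1, ?_⟩
  rwa [← deleteEdges_eq_inter_edgeSet]

variable (G Γ i) in
def separationGraph : SimpleGraph V where
  Adj := separatesColor G Γ i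
  symm := ⟨fun _ _ h => separatesColor_iff.2 fun h' => separatesColor_iff.1 h h'.symm⟩
  loopless := ⟨fun _ h => separatesColor_iff.1 h .rfl⟩

theorem edgeSet_separationGraph : (G.separationGraph Γ i).edgeSet =
    {p | ¬ p.IsDiag ∧ ∀ u v, p = s(u, v) → separatesColor G Γ i u v} :=
  edgeSet_eq_setOf_forall_adj _

theorem degree_separationGraph [Fintype V] (x : V) :
    (G.separationGraph Γ i).degree x = #{y | ¬ (G.deleteColor Γ i).Reachable x y} := by
  rw [← card_neighborFinset_eq_degree, neighborFinset_eq_filter]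
  exact congrArg card (filter_congr fun _ _ => separatesColor_iff)

theorem card_filter_not_reachable_deleteColor_le_dist [Fintype V] (s : Finset ℕ) {x y : V}
    (h : G.Reachable x y) : #{i ∈ s | ¬ (G.deleteColor Γ i).Reachable x y} ≤ G.dist x y := by
  obtain ⟨p, hp⟩ := h.exists_walk_length_eq_dist
  calc #{i ∈ s | ¬ (G.deleteColor Γ i).Reachable x y} ≤ #(p.edges.toFinset.image Γ) :=
        card_le_card fun i hi => ?_
    _ ≤ #p.edges.toFinset := card_image_le
    _ ≤ p.edges.length := p.edges.toFinset_card_le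
    _ = G.dist x y := by rw [Walk.length_edges, hp]
  -- a colour missing from `p` leaves `p` intact in `G.deleteColor Γ i`
  rw [mem_filter] at hi
  by_contra hni
  exact hi.2 ⟨p.toDeleteEdges _ fun e he hei =>
    hni (mem_image.2 ⟨e, List.mem_toFinset.2 he, hei⟩)⟩

end SimpleGraph

namespace IsMDColoring

variable {G : SimpleGraph V} {Γ : Sym2 V → ℕ} {i : ℕ}

theorem not_reachable_deleteColor (hΓ : IsMDColoring G Γ) {u v : V} (h : G.Adj u v) :
    ¬ (G.deleteColor Γ (Γ s(u, v))).Reachable u v := by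
  obtain ⟨j, F, hFG, hF, huv⟩ := hΓ u v h.ne
  have huvF : s(u, v) ∈ F := by
    by_contra huvF
    exact huv (Adj.reachable (by rw [deleteEdges_adj]; exact ⟨h, huvF⟩))
  rw [hF _ huvF]
  exact separatesColor_iff.1 ⟨F, hFG, hF, huv⟩

theorem exists_not_reachable_deleteColor (hΓ : IsMDColoring G Γ) (hi : i ∈ Γ '' G.edgeSet) :
    ∃ u v, ¬ (G.deleteColor Γ i).Reachable u v := by
  obtain ⟨e, he, rfl⟩ := hi
  induction e using Sym2.ind with
  | _ u v => exact ⟨u, v, hΓ.not_reachable_deleteColor he⟩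

theorem eq_of_reachable_deleteColor (hΓ : IsMDColoring G Γ) {b u v : V} (hu : G.Adj b u)
    (hv : G.Adj b v) (hcu : Γ s(b, u) = i) (hcv : Γ s(b, v) = i)
    (huv : (G.deleteColor Γ i).Reachable u v) : u = v := by
  by_contra hne
  obtain ⟨j, hj⟩ := hΓ u v hne
  rcases eq_or_ne j i with rfl | hji
  · exact separatesColor_iff.1 hj huv
  · -- the path `u - b - v` avoids colour `j`
    obtain ⟨F, -, hF, hsep⟩ := hj
    have hadj : ∀ {x}, G.Adj b x → Γ s(b, x) = i → (G.deleteEdges F).Adj b x :=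
      fun hx hcx => by
        rw [deleteEdges_adj]
        exact ⟨hx, fun he => hji (hcx ▸ hF _ he).symm⟩
    exact hsep ((hadj hu hcu).symm.reachable.trans (hadj hv hcv).reachable)

section Finite

variable [Fintype V] {k : ℕ}

theorem card_reachable_add_degree_le (hΓ : IsMDColoring G Γ) {x b : V}
    (hb : ¬ (G.deleteColor Γ i).Reachable x b) :
    #{y | (G.deleteColor Γ i).Reachable x y} + G.degree b ≤ Fintype.card V := by
  set C : Finset V := {y | (G.deleteColor Γ i).Reachable x y}
  have hbC : b ∉ C := by simpa [C] using hb
  -- `b` has at most one neighbour in `C`: all edges from `b` into `C` have colour `i`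
  have hin : #(G.neighborFinset b ∩ C) ≤ 1 := by
    have hcol : ∀ y ∈ G.neighborFinset b ∩ C, Γ s(b, y) = i := by
      intro y hy
      simp only [mem_inter, mem_neighborFinset, mem_filter, mem_univ, true_and, C] at hy
      by_contra hne
      refine hb (hy.2.trans (Adj.reachable ?_))
      rw [deleteColor, deleteEdges_adj, Sym2.eq_swap]
      exact ⟨hy.1.symm, hne⟩
    refine card_le_one.2 fun u hu v hv => hΓ.eq_of_reachable_deleteColor
      (mem_neighborFinset _ _ _ |>.1 (mem_inter.1 hu).1)
      (mem_neighborFinset _ _ _ |>.1 (mem_inter.1 hv).1) (hcol u hu) (hcol v hv) ?_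
    simp only [mem_inter, mem_filter, mem_univ, true_and, C] at hu hv
    exact hu.2.symm.trans hv.2
  have hout : G.neighborFinset b \ C ⊆ Cᶜ.erase b := fun y hy => by
    rw [mem_sdiff, mem_neighborFinset] at hy
    exact mem_erase.2 ⟨hy.1.ne', mem_compl.2 hy.2⟩
  have hCb : b ∈ Cᶜ := mem_compl.2 hbC
  calc #C + G.degree b = #C + (#(G.neighborFinset b \ C) + #(G.neighborFinset b ∩ C)) := by
        rw [card_sdiff_add_card_inter, card_neighborFinset_eq_degree]
    _ ≤ #C + (#(Cᶜ.erase b) + 1) := by grw [card_le_card hout, hin]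
    _ = Fintype.card V := by
        rw [card_erase_of_mem hCb, card_compl]
        have := card_pos.2 ⟨b, hCb⟩
        rw [card_compl] at this
        omega

theorem two_mul_mul_le_sum_degree_separationGraph (hΓ : IsMDColoring G Γ)
    (hdeg : ∀ v, k ≤ G.degree v) (hk : 2 * k ≤ Fintype.card V + 1)
    (hi : i ∈ Γ '' G.edgeSet) :
    2 * (k * (Fintype.card V - k)) ≤ ∑ x, (G.separationGraph Γ i).degree x := by
  simp_rw [degree_separationGraph]
  obtain ⟨u, v, huv⟩ := hΓ.exists_not_reachable_deleteColor hi
  refine (reachable_is_equivalence (G.deleteColor Γ i)).two_mul_mul_le_sum_card_not_rel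
    (fun x => ?_) hk
  obtain ⟨b, hb⟩ : ∃ b, ¬ (G.deleteColor Γ i).Reachable x b := by
    by_contra! h
    exact huv ((h u).symm.trans (h v))
  have := hΓ.card_reachable_add_degree_le hb
  have := hdeg b
  omega

theorem mul_le_card_edgeFinset_separationGraph (hΓ : IsMDColoring G Γ)
    (hdeg : ∀ v, k ≤ G.degree v) (hk : 2 * k ≤ Fintype.card V + 1)
    (hi : i ∈ Γ '' G.edgeSet) :
    k * (Fintype.card V - k) ≤ #(G.separationGraph Γ i).edgeFinset := by
  have := hΓ.two_mul_mul_le_sum_degree_separationGraph hdeg hk hi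
  rw [sum_degrees_eq_twice_card_edges] at this
  omega

theorem ncard_mul_le_sum_dist (hΓ : IsMDColoring G Γ) (hG : G.Connected)
    (hdeg : ∀ v, k ≤ G.degree v) (hk : 2 * k ≤ Fintype.card V + 1) :
    (Γ '' G.edgeSet).ncard * (2 * (k * (Fintype.card V - k))) ≤ ∑ x, ∑ y, G.dist x y := by
  set s := (G.edgeSet.toFinite.image Γ).toFinset
  calc (Γ '' G.edgeSet).ncard * (2 * (k * (Fintype.card V - k)))
      = #s • (2 * (k * (Fintype.card V - k))) := by
        rw [Set.ncard_eq_toFinset_card _ (G.edgeSet.toFinite.image Γ), smul_eq_mul]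
    _ ≤ ∑ i ∈ s, ∑ x, (G.separationGraph Γ i).degree x :=
        card_nsmul_le_sum _ _ _ fun i hi =>
          hΓ.two_mul_mul_le_sum_degree_separationGraph hdeg hk (by simpa [s] using hi)
    _ = ∑ x, ∑ y, #{i ∈ s | ¬ (G.deleteColor Γ i).Reachable x y} := by
        simp only [degree_separationGraph, card_filter]
        rw [sum_comm]
        exact sum_congr rfl fun x _ => sum_comm
    _ ≤ ∑ x, ∑ y, G.dist x y := sum_le_sum fun x _ => sum_le_sum fun y _ =>
        card_filter_not_reachable_deleteColor_le_dist s (hG x y)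

end Finite

end IsMDColoring

theorem mdNumber_le_of_forall {G : SimpleGraph V} {m : ℕ}
    (h : ∀ Γ, IsMDColoring G Γ → (Γ '' G.edgeSet).ncard ≤ m) : mdNumber G ≤ m :=
  csSup_le' fun _ ⟨Γ, hΓ, hm⟩ => hm ▸ h Γ hΓ

theorem le_mdBound_of_mul_le {ε N K t : ℝ} (h0 : 0 < ε) (h1 : ε < 1 / 2) (ht0 : 0 ≤ t)
    (hlo : ε * N ≤ K) (hhi : K < ε * N + 1) (hK : 1 ≤ K) (hKN : K + 1 ≤ N)
    (ht : t * (2 * (K * (N - K))) ≤ N * ((2 * (N - 1) + K) ^ 2 / (8 * K))) :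
    t ≤ (1 + ε) ^ 2 / (4 * ε ^ 2 * (1 - ε)) := by
  set x := ε * N
  have hxK : x ≤ 2 * (N - K) := by nlinarith
  -- `y ↦ y² (N - y)` increases on `[x, K]` because `x ≤ 2 (N - K)`
  have hcube : x ^ 2 * (N - x) ≤ K ^ 2 * (N - K) := by
    have hpos : 0 ≤ (K + x) * (N - K) - x ^ 2 := by nlinarith
    nlinarith [mul_nonneg (sub_nonneg.2 hlo) hpos]
  have hsq : (2 * (N - 1) + K) ^ 2 ≤ (2 * (1 + ε) * N) ^ 2 := by
    gcongr
    · linarith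
    · linarith
  have ht' : 16 * t * (K ^ 2 * (N - K)) ≤ 4 * (1 + ε) ^ 2 * N ^ 3 := by
    rw [mul_div_assoc', le_div_iff₀ (by positivity)] at ht
    nlinarith
  have hN : 0 < N := by linarith
  rw [le_div_iff₀ (by nlinarith)]
  have : t * (4 * ε ^ 2 * (1 - ε)) * N ^ 3 ≤ (1 + ε) ^ 2 * N ^ 3 := by
    calc t * (4 * ε ^ 2 * (1 - ε)) * N ^ 3 = 4 * t * (x ^ 2 * (N - x)) := by ring
      _ ≤ 4 * t * (K ^ 2 * (N - K)) := by gcongr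
      _ ≤ (1 + ε) ^ 2 * N ^ 3 := by linarith
  exact le_of_mul_le_mul_right this (by positivity)

section Finite

variable [Fintype V] {G : SimpleGraph V}

theorem mdNumber_le {ε : ℝ} (h0 : 0 < ε) (h1 : ε < 1 / 2)
    (hkn : ⌈ε * Fintype.card V⌉₊ < Fintype.card V)
    (hconn : ∀ S : Set V, S.ncard < ⌈ε * Fintype.card V⌉₊ → (G.induce Sᶜ).Connected) :
    (mdNumber G : ℝ) ≤ (1 + ε) ^ 2 / (4 * ε ^ 2 * (1 - ε)) := by
  set n := Fintype.card V
  set k := ⌈ε * n⌉₊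
  have hn : (0 : ℝ) < n := by exact_mod_cast (show 0 < n by omega)
  have hk : 0 < k := Nat.ceil_pos.2 (by positivity)
  have hhi : (k : ℝ) < ε * n + 1 := Nat.ceil_lt_add_one (by positivity)
  have h2k : 2 * k ≤ n + 1 := by
    have : ((2 * k : ℕ) : ℝ) < n + 2 := by push_cast; nlinarith
    have : 2 * k < n + 2 := by exact_mod_cast this
    omega
  have hC : 0 ≤ (1 + ε) ^ 2 / (4 * ε ^ 2 * (1 - ε)) := by
    have : 0 < 1 - ε := by linarith
    positivity
  refine (Nat.le_floor_iff hC).1 (mdNumber_le_of_forall fun Γ hΓ => Nat.le_floor ?_)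
  have hcount := hΓ.ncard_mul_le_sum_dist (connected_of_forall_induce_compl_connected hconn hk)
    (le_degree_of_forall_induce_compl_connected hconn hkn) h2k
  have hdist : ∑ x, ∑ y, (G.dist x y : ℝ) ≤ n * ((2 * (n - 1) + k) ^ 2 / (8 * k)) := by
    simpa using sum_le_sum fun x (_ : x ∈ univ) => sum_dist_le hconn hk x
  refine le_mdBound_of_mul_le h0 h1 (by positivity) (Nat.le_ceil _) hhi
    (by exact_mod_cast hk) (by exact_mod_cast hkn) (le_trans ?_ hdist)
  rw [← Nat.cast_sub hkn.le]
  exact_mod_cast hcount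

theorem IsMDColoring.mul_le_ncard_separated_pairs {Γ : Sym2 V → ℕ} (hΓ : IsMDColoring G Γ)
    {k : ℕ} (hkn : k < Fintype.card V) (h2k : 2 * k ≤ Fintype.card V + 1)
    (hconn : ∀ S : Set V, S.ncard < k → (G.induce Sᶜ).Connected) {i : ℕ}
    (hi : i ∈ Γ '' G.edgeSet) :
    k * (Fintype.card V - k) ≤ {p : Sym2 V | ¬ p.IsDiag ∧
      ∀ u v : V, p = s(u, v) → separatesColor G Γ i u v}.ncard := by
  rw [← edgeSet_separationGraph, ← coe_edgeFinset, Set.ncard_coe_finset]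
  exact hΓ.mul_le_card_edgeFinset_separationGraph
    (le_degree_of_forall_induce_compl_connected hconn hkn) h2k hi

end Finite

/-- For every `0 < ε < 1/2` there is a constant
`C(ε) ≤ (1+ε)² / (4ε²(1-ε))` bounding the MD-number of every
`⌈εn⌉`-connected graph on `n` vertices; moreover, in a `k`-connected graph
with `k = εn`, every color of an extremal MD-coloring separates at least
`k(n-k)` unordered pairs of vertices. -/
theorem stmt_18 (ε : ℝ) (h0 : 0 < ε) (h1 : ε < 1 / 2) :
    ∃ C : ℝ, C ≤ (1 + ε) ^ 2 / (4 * ε ^ 2 * (1 - ε)) ∧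
      (∀ (n : ℕ) (G : SimpleGraph (Fin n)),
        ⌈ε * n⌉₊ < n →
        (∀ S : Set (Fin n), S.ncard < ⌈ε * n⌉₊ → (G.induce Sᶜ).Connected) →
        (mdNumber G : ℝ) ≤ C) ∧
      (∀ (n k : ℕ) (G : SimpleGraph (Fin n)) (Γ : Sym2 (Fin n) → ℕ),
        (k : ℝ) = ε * n → k < n →
        (∀ S : Set (Fin n), S.ncard < k → (G.induce Sᶜ).Connected) →
        IsMDColoring G Γ → (Γ '' G.edgeSet).ncard = mdNumber G →
        ∀ i ∈ Γ '' G.edgeSet,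
          k * (n - k) ≤
            {p : Sym2 (Fin n) | ¬ p.IsDiag ∧
              ∀ u v : Fin n, p = s(u, v) → separatesColor G Γ i u v}.ncard) := by
  refine ⟨_, le_rfl, fun n G hkn hconn => ?_, fun n k G Γ hk hkn hconn hΓ _ i hi => ?_⟩
  · simpa using mdNumber_le h0 h1 (by simpa using hkn) (by simpa using hconn)
  · have hn : (0 : ℝ) < n := by exact_mod_cast (show 0 < n by omega)
    have h2k : ((2 * k : ℕ) : ℝ) < n := by push_cast; nlinarith
    replace h2k : 2 * k < n := by exact_mod_cast h2k
    simpa using hΓ.mul_le_ncard_separated_pairs (by simpa using hkn) (by simp; omega) hconn hi
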